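/- If a permutation ζ of a transition system's states and agent indices preserves the transition relation (g →a g' iff ζ(g) →ζ(a) ζ(g')), preserves epistemic relations, and maps the valuation accordingly (p_i holds at g iff p_{ζ(i)} holds at ζ(g)), then for every ACTL*K_{-X} state formula φ and state g: g ⊨ φ iff ζ(g) ⊨ ζ(φ), where ζ(φ) renames each agent index i occurring in φ to ζ(i). -/
import Mathlib


-- State and path formulas of ACTL*K without next, in negation normal form,
-- with atoms and epistemic modalities indexed by agents in `A`.
mutual
inductive SForm (AP A : Type) : Type where
  | atom : AP → A → SForm AP A
  | natom : AP → A → SForm AP A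
  | sand : SForm AP A → SForm AP A → SForm AP A
  | sor : SForm AP A → SForm AP A → SForm AP A
  | know : A → SForm AP A → SForm AP A
  | aall : PForm AP A → SForm AP A

inductive PForm (AP A : Type) : Type where
  | ofState : SForm AP A → PForm AP A
  | pand : PForm AP A → PForm AP A → PForm AP A
  | por : PForm AP A → PForm AP A → PForm AP A
  | puntil : PForm AP A → PForm AP A → PForm AP A
  | prelease : PForm AP A → PForm AP A → PForm AP A
end

-- Renaming of agent indices in a formula.
mutual
def renameS {AP A B : Type} (f : A → B) : SForm AP A → SForm AP B
  | .atom p i => .atom p (f i)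
  | .natom p i => .natom p (f i)
  | .sand φ ψ => .sand (renameS f φ) (renameS f ψ)
  | .sor φ ψ => .sor (renameS f φ) (renameS f ψ)
  | .know i φ => .know (f i) (renameS f φ)
  | .aall φ => .aall (renameP f φ)

def renameP {AP A B : Type} (f : A → B) : PForm AP A → PForm AP B
  | .ofState φ => .ofState (renameS f φ)
  | .pand φ ψ => .pand (renameP f φ) (renameP f ψ)
  | .por φ ψ => .por (renameP f φ) (renameP f ψ)
  | .puntil φ ψ => .puntil (renameP f φ) (renameP f ψ)
  | .prelease φ ψ => .prelease (renameP f φ) (renameP f ψ)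
end

/-- A model with action-labeled transitions: global states, actions, a
labeled transition relation, an initial state, epistemic indistinguishability
relations, and an indexed valuation. -/
structure LModel (AP A : Type) where
  G : Type
  Act : Type
  R : Act → G → G → Prop
  init : G
  eqv : A → G → G → Prop
  val : G → AP → A → Prop

def LModel.ValidPath {AP A : Type} (M : LModel AP A) (π : ℕ → M.G)
    (α : ℕ → M.Act) : Prop :=
  ∀ j, M.R (α j) (π j) (π (j + 1))

def shiftPath {G : Type} (π : ℕ → G) (i : ℕ) : ℕ → G := fun j => π (i + j)

-- Satisfaction of state formulas at states and of path formulas on paths.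
mutual
def ssat {AP A : Type} (M : LModel AP A) : SForm AP A → M.G → Prop
  | .atom p i, g => M.val g p i
  | .natom p i, g => ¬ M.val g p i
  | .sand φ ψ, g => ssat M φ g ∧ ssat M ψ g
  | .sor φ ψ, g => ssat M φ g ∨ ssat M ψ g
  | .know i φ, g => ∀ g', M.eqv i g g' → ssat M φ g'
  | .aall φ, g => ∀ π α, M.ValidPath π α → π 0 = g → psat M φ π

def psat {AP A : Type} (M : LModel AP A) : PForm AP A → (ℕ → M.G) → Prop
  | .ofState φ, π => ssat M φ (π 0)
  | .pand φ ψ, π => psat M φ π ∧ psat M ψ π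
  | .por φ ψ, π => psat M φ π ∨ psat M ψ π
  | .puntil φ ψ, π => ∃ i, psat M ψ (shiftPath π i) ∧ ∀ j < i, psat M φ (shiftPath π j)
  | .prelease φ ψ, π => ∀ i, (∀ j < i, ¬ psat M φ (shiftPath π j)) → psat M ψ (shiftPath π i)
end

section Aux

variable {AP A : Type} (M : LModel AP A)
    (ζ : Equiv.Perm A) (ζS : M.G ≃ M.G) (ζAct : M.Act ≃ M.Act)
    (hR : ∀ a g g', M.R a g g' ↔ M.R (ζAct a) (ζS g) (ζS g'))
    (heqv : ∀ i g g', M.eqv i g g' ↔ M.eqv (ζ i) (ζS g) (ζS g'))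
    (hval : ∀ g p i, M.val g p i ↔ M.val (ζS g) p (ζ i))

set_option linter.unusedSectionVars false in
include hR heqv hval in
mutual
theorem ssat_inv : ∀ (φ : SForm AP A) (g : M.G),
    ssat M φ g ↔ ssat M (renameS (⇑ζ) φ) (ζS g)
  | .atom p i, g => by simpa [ssat, renameS] using hval g p i
  | .natom p i, g => by simpa [ssat, renameS] using not_congr (hval g p i)
  | .sand φ ψ, g => by
      simp only [ssat, renameS]
      exact and_congr (ssat_inv φ g) (ssat_inv ψ g)
  | .sor φ ψ, g => by
      simp only [ssat, renameS]
      exact or_congr (ssat_inv φ g) (ssat_inv ψ g)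
  | .know i φ, g => by
      simp only [ssat, renameS]
      constructor
      · intro h g' hg'
        rw [show g' = ζS (ζS.symm g') by simp] at hg' ⊢
        rw [← ssat_inv φ]
        exact h _ ((heqv i g _).2 (by simpa using hg'))
      · intro h g' hg'
        rw [ssat_inv φ]
        exact h _ ((heqv i g g').1 hg')
  | .aall φ, g => by
      simp only [ssat, renameS]
      constructor
      · intro h π α hv h0
        have : psat M φ (fun j => ζS.symm (π j)) := by
          refine h _ (fun j => ζAct.symm (α j)) (fun j => ?_) (by simp [h0])
          exact (hR _ _ _).2 (by simpa using hv j)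
        have := (psat_inv φ (fun j => ζS.symm (π j))).1 this
        simpa using this
      · intro h π α hv h0
        have : psat M (renameP (⇑ζ) φ) (fun j => ζS (π j)) := by
          refine h _ (fun j => ζAct (α j)) (fun j => (hR _ _ _).1 (hv j)) (by simp [h0])
        exact (psat_inv φ π).2 this

theorem psat_inv : ∀ (φ : PForm AP A) (π : ℕ → M.G),
    psat M φ π ↔ psat M (renameP (⇑ζ) φ) (fun j => ζS (π j))
  | .ofState φ, π => by
      simp only [psat, renameP]
      exact ssat_inv φ (π 0)
  | .pand φ ψ, π => by
      simp only [psat, renameP]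
      exact and_congr (psat_inv φ π) (psat_inv ψ π)
  | .por φ ψ, π => by
      simp only [psat, renameP]
      exact or_congr (psat_inv φ π) (psat_inv ψ π)
  | .puntil φ ψ, π => by
      simp only [psat, renameP]
      refine exists_congr fun i => and_congr ?_ (forall_congr' fun j =>
        forall_congr' fun _ => ?_)
      · exact psat_inv ψ (shiftPath π i)
      · exact psat_inv φ (shiftPath π j)
  | .prelease φ ψ, π => by
      simp only [psat, renameP]
      refine forall_congr' fun i => ?_
      have h1 : ∀ j, psat M φ (shiftPath π j) ↔
          psat M (renameP (⇑ζ) φ) (shiftPath (fun j => ζS (π j)) j) :=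
        fun j => psat_inv φ (shiftPath π j)
      have h2 := psat_inv ψ (shiftPath π i)
      constructor
      · intro h hj
        exact (h2).1 (h fun j hji hc => hj j hji ((h1 j).1 hc))
      · intro h hj
        exact (h2).2 (h fun j hji hc => hj j hji ((h1 j).2 hc))
end

end Aux

/-- If a permutation `ζ` of the agent indices together with bijections `ζS`
on states and `ζAct` on actions preserves the labeled transition relation
(`g →a g'` iff `ζS g →ζAct a ζS g'`), preserves the epistemic relations, and
maps the valuation accordingly (`p_i` holds at `g` iff `p_{ζ i}` holds at
`ζS g`), then for every ACTL*K_{-X} state formula `φ` and state `g`: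
`g ⊨ φ` iff `ζS g ⊨ ζ(φ)`, where `ζ(φ)` renames each index `i` to `ζ i`. -/
theorem sat_perm_invariant {AP A : Type} (M : LModel AP A)
    (ζ : Equiv.Perm A) (ζS : M.G ≃ M.G) (ζAct : M.Act ≃ M.Act)
    (hR : ∀ a g g', M.R a g g' ↔ M.R (ζAct a) (ζS g) (ζS g'))
    (heqv : ∀ i g g', M.eqv i g g' ↔ M.eqv (ζ i) (ζS g) (ζS g'))
    (hval : ∀ g p i, M.val g p i ↔ M.val (ζS g) p (ζ i)) :
    ∀ (φ : SForm AP A) (g : M.G), ssat M φ g ↔ ssat M (renameS (⇑ζ) φ) (ζS g) := by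
  exact ssat_inv M ζ ζS ζAct hR heqv hval
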